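/- arXiv:1206.6645 — 3 statements merged into one kernel-verified Lean document; each statement's English description precedes it below -/
import Mathlib

section
/- For all integers ℓ1, ℓ2, ℓ3 with |ℓ1| ≤ m1 and |ℓ2| + |ℓ3| ≤ m2, if ℓ1·ω1 + ℓ2·ω2 + ℓ3·ω3 = 0 and ℓ3·ε + ℓ1 + ℓ2 + ℓ3 − 1 is even, then (ℓ1, ℓ2, ℓ3) = (m1, m2−1, −1) or (ℓ1, ℓ2, ℓ3) = (−m1, −(m2−1), 1). In other words, up to sign, (m1, m2−1, −1) is the unique triple within these bounds satisfying both the frequency equation and the parity condition. -/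
/-- Claim (1) in the proof of Proposition `main1`: up to sign,
`(m1, m2-1, -1)` is the unique triple `(ℓ1, ℓ2, ℓ3)` within the bounds
`|ℓ1| ≤ m1`, `|ℓ2| + |ℓ3| ≤ m2` satisfying both the frequency equation
`ℓ1·ω1 + ℓ2·ω2 + ℓ3·ω3 = 0` and the parity condition. -/
theorem stmt2
    (m1 m2 : ℕ) (hm1 : 1 ≤ m1) (hm2 : 1 ≤ m2)
    (ω1 ω2 : ℤ) (hω1 : 0 < ω1) (hω2 : 0 < ω2)
    (hgap : ((m1 : ℤ) + m2) * m1 * ω1 < ω2)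
    (ω3 : ℤ) (hω3 : ω3 = (m1 : ℤ) * ω1 + ((m2 : ℤ) - 1) * ω2)
    (ε : ℤ) (hε : ε = 0 ∨ ε = 1)
    (hεmod : ε ≡ (m1 : ℤ) + m2 - 1 [ZMOD 2]) :
    ∀ ℓ1 ℓ2 ℓ3 : ℤ, |ℓ1| ≤ (m1 : ℤ) → |ℓ2| + |ℓ3| ≤ (m2 : ℤ) →
      ℓ1 * ω1 + ℓ2 * ω2 + ℓ3 * ω3 = 0 →
      Even (ℓ3 * ε + ℓ1 + ℓ2 + ℓ3 - 1) →
      (ℓ1 = (m1 : ℤ) ∧ ℓ2 = (m2 : ℤ) - 1 ∧ ℓ3 = -1)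
      ∨ (ℓ1 = -(m1 : ℤ) ∧ ℓ2 = -((m2 : ℤ) - 1) ∧ ℓ3 = 1) := by
  intro ℓ1 ℓ2 ℓ3 h1 h2 heq hpar
  subst hω3
  have hA : (ℓ1 + ℓ3 * m1) * ω1 + (ℓ2 + ℓ3 * ((m2:ℤ) - 1)) * ω2 = 0 := by
    linear_combination heq
  have hl3 : |ℓ3| ≤ (m2:ℤ) := le_trans (le_add_of_nonneg_left (abs_nonneg ℓ2)) h2
  have habs : |ℓ1 + ℓ3 * m1| ≤ ((m1:ℤ) + m2) * m1 := by
    have := abs_add_le ℓ1 (ℓ3 * m1)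
    rw [abs_mul] at this
    have h3 : |(m1:ℤ)| = m1 := abs_of_nonneg (by positivity)
    nlinarith [abs_nonneg ℓ1, abs_nonneg ℓ3, Int.ofNat_nonneg m1]
  have hB : ℓ2 + ℓ3 * ((m2:ℤ) - 1) = 0 := by
    by_contra hB
    have h1b : 1 ≤ |ℓ2 + ℓ3 * ((m2:ℤ) - 1)| := Int.one_le_abs (by omega)
    have key : |(ℓ1 + ℓ3 * m1) * ω1| = |(ℓ2 + ℓ3 * ((m2:ℤ) - 1)) * ω2| := by
      rw [abs_eq_abs]; right; linarith
    rw [abs_mul, abs_mul, abs_of_pos hω1, abs_of_pos hω2] at key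
    nlinarith [abs_nonneg (ℓ1 + ℓ3 * (m1:ℤ))]
  have hA0 : ℓ1 + ℓ3 * m1 = 0 := by
    rw [hB, zero_mul, add_zero] at hA
    exact (mul_eq_zero.mp hA).resolve_right (by omega)
  have hl1 : ℓ1 = -ℓ3 * m1 := by linarith
  have : |ℓ3| * m1 ≤ (m1:ℤ) := by
    rw [hl1, abs_mul, abs_neg] at h1
    rwa [abs_of_nonneg (by positivity : (0:ℤ) ≤ (m1:ℤ))] at h1
  have hm1' : (1:ℤ) ≤ (m1:ℤ) := by exact_mod_cast hm1
  have hl3' : |ℓ3| ≤ 1 := by nlinarith [abs_nonneg ℓ3]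
  have : ℓ3 = -1 ∨ ℓ3 = 0 ∨ ℓ3 = 1 := by
    rcases abs_le.mp hl3' with ⟨ha, hb⟩; omega
  rcases this with h | h | h
  · left; subst h; constructor; omega; constructor; omega; rfl
  · exfalso
    subst h
    have h10 : ℓ1 = 0 := by omega
    have h20 : ℓ2 = 0 := by omega
    rcases hpar with ⟨k, hk⟩
    omega
  · right; subst h; constructor; omega; constructor; omega; rfl
end

section
/- Let d1, d2 be nonnegative integers with d1 ≤ m1, d2 ≤ m2 and (d1, d2) ≠ (m1, m2). Then for all integers ℓ1, ℓ2, ℓ3 with |ℓ1| ≤ d1 and |ℓ2| + |ℓ3| ≤ d2, if ℓ1·ω1 + ℓ2·ω2 + ℓ3·ω3 = 0 then ℓ1 = ℓ2 = ℓ3 = 0; in particular, no such triple can additionally satisfy the parity condition that ℓ3·ε + ℓ1 + ℓ2 + ℓ3 − 1 is even. -/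
set_option maxHeartbeats 1000000 in
/-- Claim (2) in the proof of Proposition `main1`: for multidegrees
`(d1, d2)` strictly smaller than `(m1, m2)`, the frequency equation
`ℓ1·ω1 + ℓ2·ω2 + ℓ3·ω3 = 0` forces `ℓ1 = ℓ2 = ℓ3 = 0`; in particular no
such triple can additionally satisfy the parity condition. -/
theorem stmt3
    (m1 m2 : ℕ) (hm1 : 1 ≤ m1) (hm2 : 1 ≤ m2)
    (ω1 ω2 : ℤ) (hω1 : 0 < ω1) (hω2 : 0 < ω2)
    (hgap : ((m1 : ℤ) + m2) * m1 * ω1 < ω2)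
    (ω3 : ℤ) (hω3 : ω3 = (m1 : ℤ) * ω1 + ((m2 : ℤ) - 1) * ω2)
    (ε : ℤ) (hε : ε = 0 ∨ ε = 1)
    (hεmod : ε ≡ (m1 : ℤ) + m2 - 1 [ZMOD 2])
    (d1 d2 : ℕ) (hd1 : d1 ≤ m1) (hd2 : d2 ≤ m2) (hd : ¬(d1 = m1 ∧ d2 = m2)) :
    ∀ ℓ1 ℓ2 ℓ3 : ℤ, |ℓ1| ≤ (d1 : ℤ) → |ℓ2| + |ℓ3| ≤ (d2 : ℤ) →
      ℓ1 * ω1 + ℓ2 * ω2 + ℓ3 * ω3 = 0 →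
      (ℓ1 = 0 ∧ ℓ2 = 0 ∧ ℓ3 = 0) ∧ ¬ Even (ℓ3 * ε + ℓ1 + ℓ2 + ℓ3 - 1) := by
  intro ℓ1 ℓ2 ℓ3 h1 h23 heq
  subst hω3
  have hm1' : (1 : ℤ) ≤ (m1 : ℤ) := by exact_mod_cast hm1
  have hm2' : (1 : ℤ) ≤ (m2 : ℤ) := by exact_mod_cast hm2
  have hd1' : (d1 : ℤ) ≤ (m1 : ℤ) := by exact_mod_cast hd1
  have hd2' : (d2 : ℤ) ≤ (m2 : ℤ) := by exact_mod_cast hd2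
  set A : ℤ := ℓ1 + ℓ3 * m1 with hAdef
  set B : ℤ := ℓ2 + ℓ3 * ((m2 : ℤ) - 1) with hBdef
  have hAB : A * ω1 + B * ω2 = 0 := by rw [hAdef, hBdef]; linear_combination heq
  have habs1 : 0 ≤ |ℓ1| := abs_nonneg _
  have habs2 : 0 ≤ |ℓ2| := abs_nonneg _
  have habs3 : 0 ≤ |ℓ3| := abs_nonneg _
  have hA : |A| ≤ ((m1 : ℤ) + m2) * m1 := by
    calc |A| ≤ |ℓ1| + |ℓ3 * (m1 : ℤ)| := abs_add_le _ _
      _ = |ℓ1| + |ℓ3| * (m1 : ℤ) := by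
          rw [abs_mul, abs_of_nonneg (by linarith : (0:ℤ) ≤ (m1:ℤ))]
      _ ≤ ((m1 : ℤ) + m2) * m1 := by nlinarith
  have hB0 : B = 0 := by
    by_contra hB
    have h1B : 1 ≤ |B| := by
      rcases lt_or_gt_of_ne hB with h | h
      · have : 1 ≤ -B := by omega
        calc (1:ℤ) ≤ -B := this
          _ ≤ |B| := by rw [abs_of_neg h]
      · calc (1:ℤ) ≤ B := h
          _ ≤ |B| := le_abs_self _
    have : |A * ω1| = |B * ω2| := by
      have : A * ω1 = -(B * ω2) := by linarith
      rw [this, abs_neg]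
    rw [abs_mul, abs_mul, abs_of_pos hω1, abs_of_pos hω2] at this
    nlinarith
  have hA0 : A = 0 := by
    have : A * ω1 = 0 := by rw [hB0] at hAB; linarith
    rcases mul_eq_zero.mp this with h | h
    · exact h
    · omega
  have hℓ1 : ℓ1 = -ℓ3 * m1 := by rw [hAdef] at hA0; linarith
  have hℓ2 : ℓ2 = -ℓ3 * ((m2:ℤ) - 1) := by rw [hBdef] at hB0; linarith
  have hℓ3 : ℓ3 = 0 := by
    by_contra h3
    have ht : 1 ≤ |ℓ3| := by
      rcases lt_or_gt_of_ne h3 with h | h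
      · have : 1 ≤ -ℓ3 := by omega
        calc (1:ℤ) ≤ -ℓ3 := this
          _ ≤ |ℓ3| := by rw [abs_of_neg h]
      · calc (1:ℤ) ≤ ℓ3 := h
          _ ≤ |ℓ3| := le_abs_self _
    have he1 : |ℓ1| = |ℓ3| * m1 := by
      rw [hℓ1, abs_mul, abs_neg, abs_of_nonneg (by linarith : (0:ℤ) ≤ (m1:ℤ))]
    have he2 : |ℓ2| = |ℓ3| * ((m2:ℤ) - 1) := by
      rw [hℓ2, abs_mul, abs_neg, abs_of_nonneg (by linarith : (0:ℤ) ≤ (m2:ℤ) - 1)]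
    have hdd1 : d1 = m1 := by
      have h1' : |ℓ3| * (m1:ℤ) ≤ (d1:ℤ) := by rw [← he1]; exact h1
      have : (m1:ℤ) ≤ (d1:ℤ) := by nlinarith
      omega
    have hdd2 : d2 = m2 := by
      have h23' : |ℓ3| * ((m2:ℤ) - 1) + |ℓ3| ≤ (d2:ℤ) := by rw [← he2]; exact h23
      have : (m2:ℤ) ≤ (d2:ℤ) := by nlinarith
      omega
    exact hd ⟨hdd1, hdd2⟩
  have hℓ1' : ℓ1 = 0 := by rw [hℓ1, hℓ3]; ring
  have hℓ2' : ℓ2 = 0 := by rw [hℓ2, hℓ3]; ring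
  refine ⟨⟨hℓ1', hℓ2', hℓ3⟩, ?_⟩
  rw [hℓ1', hℓ2', hℓ3]
  simp [Int.even_sub, parity_simps]
end

section
/- Let (E, d) be a metric space, ε > 0, and F : E × E → E a map such that d(F(x, a), a) ≤ (1/2)·d(x, a) whenever x, a ∈ E satisfy d(x, a) < ε. Let (a_j)_{j ≥ 0} be a sequence in E with d(a_{j−1}, a_j) < ε/2 for every j ≥ 1. Define x_0 := a_0 and, recursively, x_j := F(x_{j−1}, a_j) for j ≥ 1. Then for every j ≥ 1 one has d(x_{j−1}, a_j) < (Σ_{k=1}^{j} 2^{−k})·ε < ε, and consequently d(x_j, a_j) ≤ (1/2)·d(x_{j−1}, a_j) < ε/2. -/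
lemma stmt6_sum (j : ℕ) :
    (∑ k ∈ Finset.Icc 1 j, ((1 : ℝ) / 2) ^ k) = 1 - (1 / 2) ^ j := by
  induction j with
  | zero => simp
  | succ n ih =>
      rw [Finset.sum_Icc_succ_top (by omega : 1 ≤ n + 1), ih]
      ring

/-- Inductive core of the proof of Theorem `th:GlobConv`: a uniformly locally
contractive steering map `F`, applied along a sequence of subgoals `a_j` with
consecutive distances less than `ε/2`, keeps every step inside the
contraction region. -/
theorem stmt6
    {E : Type*} [MetricSpace E] (ε : ℝ) (hε : 0 < ε)
    (F : E → E → E)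
    (hF : ∀ x a : E, dist x a < ε → dist (F x a) a ≤ (1 / 2) * dist x a)
    (a : ℕ → E) (ha : ∀ j : ℕ, 1 ≤ j → dist (a (j - 1)) (a j) < ε / 2)
    (x : ℕ → E) (hx0 : x 0 = a 0)
    (hx : ∀ j : ℕ, 1 ≤ j → x j = F (x (j - 1)) (a j)) :
    ∀ j : ℕ, 1 ≤ j →
      (dist (x (j - 1)) (a j) < (∑ k ∈ Finset.Icc 1 j, ((1 : ℝ) / 2) ^ k) * ε
      ∧ (∑ k ∈ Finset.Icc 1 j, ((1 : ℝ) / 2) ^ k) * ε < ε)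
      ∧ (dist (x j) (a j) ≤ (1 / 2) * dist (x (j - 1)) (a j)
        ∧ dist (x j) (a j) < ε / 2) := by
  have hpow : ∀ j : ℕ, (0 : ℝ) < (1 / 2) ^ j := fun j => by positivity
  -- main: prove the first part by induction, rest follows
  have key : ∀ j : ℕ, 1 ≤ j →
      dist (x (j - 1)) (a j) < (1 - (1 / 2) ^ j) * ε := by
    intro j hj
    induction j, hj using Nat.le_induction with
    | base =>
        simpa [hx0, pow_one] using
          (by linarith [ha 1 le_rfl] : dist (a 0) (a 1) < (1 - (1:ℝ)/2) * ε)
    | succ n hn ih =>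
        have ih' := ih
        have hd : dist (x (n - 1)) (a n) < (1 - (1 / 2) ^ n) * ε := ih'
        have hdε : dist (x (n - 1)) (a n) < ε := by
          have : (1 - ((1:ℝ) / 2) ^ n) * ε < ε := by nlinarith [hpow n]
          linarith
        have hFn : dist (x n) (a n) ≤ (1 / 2) * dist (x (n - 1)) (a n) := by
          rw [hx n hn]; exact hF _ _ hdε
        have han : dist (a n) (a (n + 1)) < ε / 2 := by
          simpa using ha (n + 1) (by omega)
        have htri : dist (x n) (a (n + 1)) ≤ dist (x n) (a n) + dist (a n) (a (n + 1)) :=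
          dist_triangle _ _ _
        have : (n + 1) - 1 = n := by omega
        rw [this]
        have : ((1:ℝ) / 2) ^ (n + 1) = (1 / 2) * (1 / 2) ^ n := by ring
        nlinarith [hpow n]
  intro j hj
  have hS := stmt6_sum j
  have h1 := key j hj
  have hdε : dist (x (j - 1)) (a j) < ε := by nlinarith [hpow j]
  have hFj : dist (x j) (a j) ≤ (1 / 2) * dist (x (j - 1)) (a j) := by
    rw [hx j hj]; exact hF _ _ hdε
  refine ⟨⟨by rw [hS]; exact h1, by rw [hS]; nlinarith [hpow j]⟩, hFj, ?_⟩
  nlinarith [hpow j, dist_nonneg (x := x (j-1)) (y := a j)]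
end
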